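/- With K_{ij} = (M_j^i)* ⊗ A_{ij} as above, and ρ = ∑_j ρ_j ⊗ |j⟩⟨j| with Tr(ρ_j) > 0, one has ∑_{i,j} Tr^{(1)}(K_{ij}* (ρ ⊗ I) K_{ij}) = ρ, where Tr^{(1)}(a ⊗ b) = Tr(a) b is the partial trace over the first tensor factor. -/

import Mathlib

/-!
Since `(x ⊗ y)(x' ⊗ y') = xx' ⊗ yy'`, each summand is `(M ρ M*) ⊗ (A* A)`, whose partial trace
is `Tr(B_{ij} ρ_j B_{ij}*) · ρ_j ⊗ |j⟩⟨j| / Tr ρ_j`: the block structure of `ρ` and of `M_{ij}`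
picks out the `j`-th block. Summing over `i`, cyclicity of the trace and `∑_i B_{ij}* B_{ij} = 1`
turn the scalar into `Tr ρ_j`, which cancels the normalisation of `A_{ij}`.
-/

open Matrix Kronecker BigOperators ComplexOrder

/-- Partial trace over the first tensor factor: `Tr⁽¹⁾(a ⊗ b) = Tr(a) b`. -/
noncomputable def ptrace1 {α β : Type*} [Fintype α] (M : Matrix (α × β) (α × β) ℂ) : Matrix β β ℂ :=
  Matrix.of fun b b' => ∑ a, M (a, b) (a, b')

/-- `Matrix.PosSemidef.sqrt` as it stood in Mathlib (Dec 2024); removed since. -/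
noncomputable def Matrix.PosSemidef.sqrt {n 𝕜 : Type*} [Fintype n] [DecidableEq n] [RCLike 𝕜]
    {A : Matrix n n 𝕜} (hA : A.PosSemidef) : Matrix n n 𝕜 :=
  hA.1.eigenvectorUnitary.1 * diagonal ((↑) ∘ (√·) ∘ hA.1.eigenvalues) *
  (star hA.1.eigenvectorUnitary : Matrix n n 𝕜)

namespace Matrix.PosSemidef

variable {n 𝕜 : Type*} [Fintype n] [DecidableEq n] [RCLike 𝕜] {A : Matrix n n 𝕜}

lemma sqrt_eq_conjStarAlgAut (hA : A.PosSemidef) :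
    hA.sqrt = Unitary.conjStarAlgAut 𝕜 _ hA.1.eigenvectorUnitary
      (diagonal ((↑) ∘ (√·) ∘ hA.1.eigenvalues)) := rfl

lemma conjTranspose_sqrt (hA : A.PosSemidef) : hA.sqrtᴴ = hA.sqrt := by
  rw [sqrt_eq_conjStarAlgAut, ← star_eq_conjTranspose, ← map_star, star_eq_conjTranspose,
    diagonal_conjTranspose]
  congr 2
  ext i
  simp

lemma sqrt_mul_self (hA : A.PosSemidef) : hA.sqrt * hA.sqrt = A := by
  conv_rhs => rw [hA.1.spectral_theorem]
  rw [sqrt_eq_conjStarAlgAut, ← map_mul, diagonal_mul_diagonal]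
  congr 2
  ext i
  simp [← RCLike.ofReal_mul, Real.mul_self_sqrt (hA.eigenvalues_nonneg i)]

end Matrix.PosSemidef

section PartialTrace

variable {m p q r : Type*} [Fintype m] [Fintype p]

lemma ptrace1_kronecker {β : Type*} (a : Matrix m m ℂ) (b : Matrix β β ℂ) :
    ptrace1 (a ⊗ₖ b) = a.trace • b := by
  ext x y
  simp [ptrace1, Matrix.trace, Finset.sum_mul]

lemma ptrace1_conj_kronecker_one [Fintype q] [DecidableEq q] [Fintype r]
    (M : Matrix p m ℂ) (A : Matrix q r ℂ) (X : Matrix m m ℂ) :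
    ptrace1 ((Mᴴ ⊗ₖ A)ᴴ * (X ⊗ₖ (1 : Matrix q q ℂ)) * (Mᴴ ⊗ₖ A))
      = (M * X * Mᴴ).trace • (Aᴴ * A) := by
  rw [conjTranspose_kronecker, conjTranspose_conjTranspose, ← mul_kronecker_mul,
    ← mul_kronecker_mul, Matrix.mul_one, ptrace1_kronecker]

end PartialTrace

section BlockDiagonal

variable {R n n' Λ : Type*} [Fintype Λ] [DecidableEq Λ]

lemma kronecker_single_mul_sum_kronecker_single [Fintype n] [CommSemiring R]
    (B : Matrix n' n R) (ρ : Λ → Matrix n n R) (i j : Λ) :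
    (B ⊗ₖ single i j 1) * ∑ k, ρ k ⊗ₖ single k k 1 = (B * ρ j) ⊗ₖ single i j 1 := by
  rw [Matrix.mul_sum, Finset.sum_eq_single j]
  · rw [← mul_kronecker_mul, single_mul_single_same, one_mul]
  · intro k _ hkj
    rw [← mul_kronecker_mul, single_mul_single_of_ne (h := hkj.symm), kronecker_zero]
  · simp

lemma conjTranspose_kronecker_single_mul_self [Fintype n'] [CommSemiring R] [StarRing R]
    (S : Matrix n' n R) (i j : Λ) :
    (S ⊗ₖ single i j 1)ᴴ * (S ⊗ₖ single i j 1) = (Sᴴ * S) ⊗ₖ single j j 1 := by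
  rw [conjTranspose_kronecker, conjTranspose_single, star_one, ← mul_kronecker_mul,
    single_mul_single_same, one_mul]

lemma trace_conj_kronecker_single [Fintype n] [Fintype n'] [CommSemiring R] [StarRing R]
    (B : Matrix n' n R) (ρ : Λ → Matrix n n R) (i j : Λ) :
    ((B ⊗ₖ single i j 1) * (∑ k, ρ k ⊗ₖ single k k 1) * (B ⊗ₖ single i j 1)ᴴ).trace
      = (B * ρ j * Bᴴ).trace := by
  rw [kronecker_single_mul_sum_kronecker_single, conjTranspose_kronecker, conjTranspose_single,
    star_one, ← mul_kronecker_mul, single_mul_single_same, one_mul, trace_kronecker,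
    trace_single_eq_same, mul_one]

end BlockDiagonal

lemma sum_trace_conj_eq_trace {R n n' ι : Type*} [Fintype n] [Fintype n'] [Fintype ι]
    [DecidableEq n] [CommSemiring R] [StarRing R]
    (B : ι → Matrix n' n R) (hB : ∑ i, (B i)ᴴ * B i = 1) (X : Matrix n n R) :
    ∑ i, (B i * X * (B i)ᴴ).trace = X.trace := by
  simp_rw [trace_mul_cycle (B _)]
  rw [← trace_sum, ← Finset.sum_mul, hB, one_mul]

lemma Complex.star_inv_sqrt_re_mul_inv_sqrt_re {z : ℂ} (hz : 0 ≤ z) :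
    star ((√z.re : ℂ))⁻¹ * ((√z.re : ℂ))⁻¹ = z⁻¹ := by
  rw [Complex.eq_re_of_ofReal_le hz, Complex.ofReal_re, star_inv₀, Complex.star_def,
    Complex.conj_ofReal, ← mul_inv, ← Complex.ofReal_mul, Real.mul_self_sqrt]
  exact Complex.nonneg_iff.1 hz |>.1

/-- With `K_{ij} = (M_j^i)* ⊗ A_{ij}` and `ρ = ∑ j, ρ_j ⊗ |j⟩⟨j|`,
`∑_{i,j} Tr⁽¹⁾(K_{ij}* (ρ ⊗ 1) K_{ij}) = ρ`. -/
theorem oqrw_amplitude_invariance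
    {n Λ : Type*} [Fintype n] [Fintype Λ] [DecidableEq n] [DecidableEq Λ]
    (B : Λ → Λ → Matrix n n ℂ)
    (hB : ∀ j, ∑ i, (B i j)ᴴ * B i j = 1)
    (M : Λ → Λ → Matrix (n × Λ) (n × Λ) ℂ)
    (hM : ∀ i j, M i j = (B i j) ⊗ₖ (Matrix.single i j (1 : ℂ)))
    (ρf : Λ → Matrix n n ℂ)
    (hpos : ∀ j, (ρf j).PosSemidef)
    (htr : ∀ j, 0 < (ρf j).trace)
    (A : Λ → Λ → Matrix (n × Λ) (n × Λ) ℂ)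
    (hA : ∀ i j, A i j
        = ((Real.sqrt ((ρf j).trace.re) : ℂ))⁻¹ •
            (((hpos j).sqrt) ⊗ₖ (Matrix.single i j (1 : ℂ))))
    (K : Λ → Λ → Matrix ((n × Λ) × (n × Λ)) ((n × Λ) × (n × Λ)) ℂ)
    (hK : ∀ i j, K i j = (M i j)ᴴ ⊗ₖ A i j)
    (ρ : Matrix (n × Λ) (n × Λ) ℂ)
    (hρ : ρ = ∑ j, (ρf j) ⊗ₖ (Matrix.single j j (1 : ℂ))) :
    ∑ i, ∑ j, ptrace1 ((K i j)ᴴ * (ρ ⊗ₖ (1 : Matrix (n × Λ) (n × Λ) ℂ)) * K i j) = ρ := by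
  have conjTranspose_A_mul_A :
      ∀ i j, (A i j)ᴴ * A i j = (ρf j).trace⁻¹ • (ρf j ⊗ₖ single j j 1) := by
    intro i j
    rw [hA, conjTranspose_smul, Matrix.smul_mul, Matrix.mul_smul, smul_smul,
      Complex.star_inv_sqrt_re_mul_inv_sqrt_re (htr j).le, conjTranspose_kronecker_single_mul_self,
      (hpos j).conjTranspose_sqrt, (hpos j).sqrt_mul_self]
  have summand_eq : ∀ i j, ptrace1 ((K i j)ᴴ * (ρ ⊗ₖ 1) * K i j)
      = (B i j * ρf j * (B i j)ᴴ).trace • ((ρf j).trace⁻¹ • (ρf j ⊗ₖ single j j 1)) := by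
    intro i j
    rw [hK, ptrace1_conj_kronecker_one, conjTranspose_A_mul_A, hM, hρ,
      trace_conj_kronecker_single]
  simp only [summand_eq]
  rw [Finset.sum_comm, hρ]
  refine Finset.sum_congr rfl fun j _ => ?_
  rw [← Finset.sum_smul, sum_trace_conj_eq_trace (B · j) (hB j), smul_smul,
    mul_inv_cancel₀ (htr j).ne', one_smul]
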